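/- arXiv:math/0610498 — 2 statements merged into one kernel-verified Lean document; each statement's English description precedes it below -/
import Mathlib

section
/- Let A ∈ ℂ^{n×n} be Hermitian, let [X, X⊥] ∈ ℂ^{n×n} be unitary with X ∈ ℂ^{n×k}, and let Y ∈ ℂ^{n×k} have orthonormal columns; set 𝒳 = range(X), 𝒴 = range(Y), S := X⊥^H Y, and A₂₂ := X⊥^H A X⊥. Then the vector |λ(−S^H A₂₂ S)| arranged in nonincreasing order equals s(S^H A₂₂ S), and s(S^H A₂₂ S) ≺_w ‖A₂₂‖ · sin²θ(𝒳,𝒴). -/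
open Matrix Finset

/-- The entries of `x` rearranged in nonincreasing (descending) order. -/
noncomputable def sortDown {k : ℕ} (x : Fin k → ℝ) : Fin k → ℝ :=
  fun i => x (Tuple.sort x i.rev)

/-- The eigenvalues of a Hermitian matrix arranged in nonincreasing order. -/
noncomputable def eigDown {k : ℕ} {M : Matrix (Fin k) (Fin k) ℂ} (hM : M.IsHermitian) :
    Fin k → ℝ :=
  sortDown hM.eigenvalues

/-- The singular values of `B` (square roots of the eigenvalues of `Bᴴ * B`),
arranged in nonincreasing order; there are as many as columns of `B`,
extra ones (beyond `min(#rows, #cols)`) being zero. -/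
noncomputable def singDown {R : Type*} [Fintype R] {k : ℕ} (B : Matrix R (Fin k) ℂ) :
    Fin k → ℝ :=
  sortDown fun i => Real.sqrt ((Matrix.isHermitian_conjTranspose_mul_self B).eigenvalues i)

/-- The spread of the spectrum of a Hermitian matrix: `λ_max - λ_min`. -/
noncomputable def sprA {R : Type*} [Fintype R] [DecidableEq R] {A : Matrix R R ℂ}
    (hA : A.IsHermitian) : ℝ :=
  sSup (Set.range hA.eigenvalues) - sInf (Set.range hA.eigenvalues)

/-- The spectral norm of `B`, i.e. its largest singular value. -/
noncomputable def specNorm {R : Type*} [Fintype R] {k : ℕ} (B : Matrix R (Fin k) ℂ) : ℝ :=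
  sSup (Set.range (singDown B))

/-- The principal angles between the ranges of `X` and `Y` (matrices with `k`
orthonormal columns), arranged in nonincreasing order: their cosines are the
singular values of `Xᴴ * Y` arranged in nondecreasing order. -/
noncomputable def principalAngles {R : Type*} [Fintype R] {k : ℕ}
    (X Y : Matrix R (Fin k) ℂ) : Fin k → ℝ :=
  fun i => Real.arccos (singDown (Xᴴ * Y) i.rev)

/-- The sum of the `j` largest entries of `x`. -/
noncomputable def psum {k : ℕ} (x : Fin k → ℝ) (j : ℕ) : ℝ :=
  ∑ i ∈ Finset.univ.filter fun i : Fin k => (i : ℕ) < j, sortDown x i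

/-- `x` is weakly (sub-)majorized by `y`: every partial sum of the `j` largest
entries of `x` is at most the corresponding partial sum for `y`. -/
def WeakMaj {k : ℕ} (x y : Fin k → ℝ) : Prop :=
  ∀ j : ℕ, psum x j ≤ psum y j

/-- `x` is (strongly) majorized by `y`. -/
def Maj {k : ℕ} (x y : Fin k → ℝ) : Prop :=
  WeakMaj x y ∧ ∑ i, x i = ∑ i, y i

/-- The range (column space) of `X` is an invariant subspace of `A`. -/
def InvariantRange {R : Type*} [Fintype R] {k : ℕ} (A : Matrix R R ℂ)
    (X : Matrix R (Fin k) ℂ) : Prop :=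
  ∀ u : Fin k → ℂ, ∃ w : Fin k → ℂ, A.mulVec (X.mulVec u) = X.mulVec w

/-!
`-Sᴴ A₂₂ S` is Hermitian, so the moduli of its eigenvalues are the singular values of
`Sᴴ A₂₂ S`. Since `[X, X⊥]` is unitary, `Sᴴ S = 1 - (Xᴴ Y)ᴴ (Xᴴ Y)`, whose eigenvalues are the
`sin² θᵢ`. If `vᵢ` and `w_l` are orthonormal eigenbases of `Sᴴ A₂₂ S` and of `Sᴴ S` (eigenvalues
`μ_l`), then `|λᵢ| = |(S vᵢ)ᴴ A₂₂ (S vᵢ)| ≤ ‖A₂₂‖ ‖S vᵢ‖² = ‖A₂₂‖ ∑_l μ_l |⟨w_l, vᵢ⟩|²`, and the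
weights `|⟨w_l, vᵢ⟩|²` form a doubly stochastic matrix. A vector dominated entrywise by a doubly
stochastic average of a nonnegative vector `μ` is weakly majorized by `μ` (bathtub principle).
-/

section SortDown

variable {k : ℕ}

lemma map_sortDown (x : Fin k → ℝ) : univ.val.map (sortDown x) = univ.val.map x := by
  change univ.val.map (x ∘ (Fin.revPerm.trans (Tuple.sort x))) = _
  rw [← Multiset.map_map, Multiset.map_univ_val_equiv]

lemma antitone_sortDown (x : Fin k → ℝ) : Antitone (sortDown x) :=
  fun _ _ hij => Tuple.monotone_sort x (Fin.rev_le_rev.mpr hij)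

lemma eq_of_antitone_of_map_univ_val_eq {x y : Fin k → ℝ} (hx : Antitone x) (hy : Antitone y)
    (h : univ.val.map x = univ.val.map y) : x = y := by
  rw [Fin.univ_val_map, Fin.univ_val_map, Multiset.coe_eq_coe] at h
  exact List.ofFn_injective (h.eq_of_sortedGE hx.sortedGE_ofFn hy.sortedGE_ofFn)

lemma sortDown_eq_of_antitone {x y : Fin k → ℝ} (hy : Antitone y)
    (h : univ.val.map y = univ.val.map x) : sortDown x = y :=
  eq_of_antitone_of_map_univ_val_eq (antitone_sortDown x) hy (by rw [map_sortDown, h])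

lemma sortDown_congr {x y : Fin k → ℝ} (h : univ.val.map x = univ.val.map y) :
    sortDown x = sortDown y :=
  sortDown_eq_of_antitone (antitone_sortDown y) (by rw [map_sortDown, h])

lemma sortDown_sortDown (x : Fin k → ℝ) : sortDown (sortDown x) = sortDown x :=
  sortDown_congr (map_sortDown x)

lemma sortDown_comp_sortDown (f : ℝ → ℝ) (x : Fin k → ℝ) :
    sortDown (f ∘ sortDown x) = sortDown (f ∘ x) :=
  sortDown_congr (by rw [← Multiset.map_map, map_sortDown, Multiset.map_map])

lemma sortDown_comp_of_monotone {f : ℝ → ℝ} (hf : Monotone f) (x : Fin k → ℝ) :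
    sortDown (f ∘ x) = f ∘ sortDown x :=
  sortDown_eq_of_antitone (hf.comp_antitone (antitone_sortDown x))
    (by rw [← Multiset.map_map, map_sortDown, Multiset.map_map])

lemma sortDown_comp_of_antitone {f : ℝ → ℝ} (hf : Antitone f) (x : Fin k → ℝ) :
    sortDown (f ∘ x) = f ∘ sortDown x ∘ Fin.rev :=
  sortDown_eq_of_antitone
    (hf.comp_monotone fun _ _ h => antitone_sortDown x (Fin.rev_le_rev.mpr h))
    (by rw [show f ∘ sortDown x ∘ Fin.rev = (f ∘ sortDown x) ∘ Fin.revPerm from rfl,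
      ← Multiset.map_map, Multiset.map_univ_val_equiv, ← Multiset.map_map, map_sortDown,
      Multiset.map_map])

lemma range_sortDown (x : Fin k → ℝ) : Set.range (sortDown x) = Set.range x :=
  EquivLike.range_comp x (Fin.revPerm.trans (Tuple.sort x))

lemma psum_sortDown (x : Fin k → ℝ) (j : ℕ) : psum (sortDown x) j = psum x j := by
  simp only [psum, sortDown_sortDown]

end SortDown

namespace Matrix.IsHermitian

variable {𝕜 n : Type*} [RCLike 𝕜] [Fintype n] [DecidableEq n] {A B : Matrix n n 𝕜}

lemma map_eigenvalues_of_eq_cfc (hA : A.IsHermitian) (hB : B.IsHermitian) {f : ℝ → ℝ}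
    (h : B = cfc f A) : univ.val.map hB.eigenvalues = univ.val.map (f ∘ hA.eigenvalues) := by
  apply Multiset.map_injective (RCLike.ofReal_injective (K := 𝕜))
  rw [Multiset.map_map, ← hB.roots_charpoly_eq_eigenvalues, h, hA.charpoly_cfc_eq,
    Polynomial.roots_prod _ _ (by simp [Finset.prod_ne_zero_iff, Polynomial.X_sub_C_ne_zero])]
  simp

lemma map_eigenvalues_neg (hA : A.IsHermitian) :
    univ.val.map hA.neg.eigenvalues = univ.val.map (-hA.eigenvalues) :=
  hA.map_eigenvalues_of_eq_cfc hA.neg (cfc_neg_id A hA).symm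

lemma map_eigenvalues_of_eq_one_sub (hA : A.IsHermitian) (hB : B.IsHermitian) (h : B = 1 - A) :
    univ.val.map hB.eigenvalues = univ.val.map (fun i => 1 - hA.eigenvalues i) :=
  hA.map_eigenvalues_of_eq_cfc hB
    (by rw [h, cfc_sub (fun _ => 1) (fun x => x) A, cfc_const_one ℝ A, cfc_id' ℝ A])

lemma map_eigenvalues_conjTranspose_mul_self (hA : A.IsHermitian) :
    univ.val.map (isHermitian_conjTranspose_mul_self A).eigenvalues =
      univ.val.map (fun i => hA.eigenvalues i ^ 2) :=
  hA.map_eigenvalues_of_eq_cfc _ (f := (· ^ 2))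
    (by rw [hA.eq, ← sq]; exact (cfc_pow_id A 2 hA).symm)

end Matrix.IsHermitian

section Majorization

variable {k : ℕ}

lemma sum_comp_sortDown (f : ℝ → ℝ) (x : Fin k → ℝ) :
    ∑ i, f (sortDown x i) = ∑ i, f (x i) :=
  Equiv.sum_comp (Fin.revPerm.trans (Tuple.sort x)) (f ∘ x)

lemma psum_of_le {j : ℕ} (hj : k ≤ j) (x : Fin k → ℝ) : psum x j = ∑ i, x i := by
  rw [psum, filter_true_of_mem fun i _ => i.isLt.trans_le hj]
  exact sum_comp_sortDown id x

lemma exists_psum_eq_sum (x : Fin k → ℝ) (j : ℕ) :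
    ∃ I : Finset (Fin k), #I ≤ j ∧ psum x j = ∑ i ∈ I, x i := by
  set σ := Fin.revPerm.trans (Tuple.sort x)
  refine ⟨(univ.filter fun i : Fin k => (i : ℕ) < j).map σ.toEmbedding, ?_, ?_⟩
  · rw [card_map, Fin.card_filter_val_lt]
    exact min_le_right _ _
  · rw [sum_map]
    rfl

/-- The bathtub principle. With `t` the `(j+1)`-st largest entry of `μ`, the pointwise bound
`μ ω ≤ (μ - t)⁺ + t ω` sums to `psum μ j - j t + t ∑ ω`. -/
lemma sum_mul_le_psum {μ ω : Fin k → ℝ} (hμ : 0 ≤ μ) (hω₀ : 0 ≤ ω) (hω₁ : ω ≤ 1) {j : ℕ}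
    (hω : ∑ l, ω l ≤ j) : ∑ l, μ l * ω l ≤ psum μ j := by
  rcases lt_or_ge j k with hjk | hkj
  · set t := sortDown μ ⟨j, hjk⟩
    have ht : 0 ≤ t := hμ _
    have hcard : #(univ.filter fun i : Fin k => (i : ℕ) < j) = j := by
      rw [Fin.card_filter_val_lt]
      exact min_eq_right hjk.le
    have hpos : ∑ l, max (μ l - t) 0 = psum μ j - j * t := calc
      _ = ∑ i, max (sortDown μ i - t) 0 := (sum_comp_sortDown (fun v => max (v - t) 0) μ).symm
      _ = ∑ i ∈ univ.filter fun i : Fin k => (i : ℕ) < j, (sortDown μ i - t) := by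
          rw [sum_filter]
          refine sum_congr rfl fun i _ => ?_
          split_ifs with hi
          · exact max_eq_left (sub_nonneg.2 (antitone_sortDown μ (Fin.le_iff_val_le_val.2 hi.le)))
          · exact max_eq_right
              (sub_nonpos.2 (antitone_sortDown μ (Fin.le_iff_val_le_val.2 (not_lt.1 hi))))
      _ = psum μ j - j * t := by rw [sum_sub_distrib, sum_const, hcard, nsmul_eq_mul]; rfl
    calc ∑ l, μ l * ω l ≤ ∑ l, (max (μ l - t) 0 + t * ω l) := by
          gcongr with l
          have h₀ : 0 ≤ ω l := hω₀ l
          have h₁ : ω l ≤ 1 := hω₁ l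
          rcases le_total 0 (μ l - t) with h | h
          · nlinarith [le_max_left (μ l - t) 0]
          · nlinarith [le_max_right (μ l - t) 0]
      _ ≤ psum μ j - j * t + t * j := by
          rw [sum_add_distrib, ← mul_sum, hpos]
          gcongr
      _ = psum μ j := by ring
  · rw [psum_of_le hkj]
    gcongr with l
    exact mul_le_of_le_one_right (hμ l) (hω₁ l)

lemma weakMaj_of_le_vecMul {μ ν : Fin k → ℝ} {P : Matrix (Fin k) (Fin k) ℝ}
    (hP : P ∈ doublyStochastic ℝ (Fin k)) (hμ : 0 ≤ μ) (h : ν ≤ μ ᵥ* P) : WeakMaj ν μ := by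
  intro j
  obtain ⟨I, hIj, hI⟩ := exists_psum_eq_sum ν j
  have hrow (l : Fin k) : ∑ i ∈ I, P l i ≤ 1 :=
    (sum_le_sum_of_subset_of_nonneg (subset_univ I) fun _ _ _ =>
      nonneg_of_mem_doublyStochastic hP).trans_eq (sum_row_of_mem_doublyStochastic hP l)
  have hmass : ∑ l, ∑ i ∈ I, P l i ≤ j := calc
    _ = ∑ i ∈ I, ∑ l, P l i := sum_comm
    _ = #I := by simp only [sum_col_of_mem_doublyStochastic hP, sum_const, nsmul_one]
    _ ≤ j := by exact_mod_cast hIj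
  calc psum ν j = ∑ i ∈ I, ν i := hI
    _ ≤ ∑ i ∈ I, ∑ l, μ l * P l i := sum_le_sum fun i _ => h i
    _ = ∑ l, μ l * ∑ i ∈ I, P l i := by simp only [mul_sum]; exact sum_comm
    _ ≤ psum μ j := sum_mul_le_psum hμ
        (fun l => sum_nonneg fun i _ => nonneg_of_mem_doublyStochastic hP) hrow hmass

end Majorization

lemma Matrix.of_norm_sq_mem_doublyStochastic {𝕜 n : Type*} [RCLike 𝕜] [Fintype n]
    [DecidableEq n] {U : Matrix n n 𝕜} (hU : U ∈ unitaryGroup n 𝕜) :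
    (of fun i j => ‖U i j‖ ^ 2) ∈ doublyStochastic ℝ n := by
  have hdiag {V : Matrix n n 𝕜} (hV : V * star V = 1) (i : n) : ∑ j, ‖V i j‖ ^ 2 = 1 := by
    have := congrFun (congrFun hV i) i
    simp only [mul_apply, star_apply, RCLike.star_def, RCLike.mul_conj, one_apply_eq] at this
    exact_mod_cast this
  refine mem_doublyStochastic_iff_sum.2
    ⟨fun _ _ => sq_nonneg _, hdiag (Unitary.mul_star_self_of_mem hU), fun j => ?_⟩
  simpa [star_apply, RCLike.norm_conj] using
    hdiag (Unitary.mul_star_self_of_mem (Unitary.star_mem hU)) j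

section SingularValues

variable {R : Type*} [Fintype R] {k : ℕ}

lemma singDown_eq_sqrt_comp (B : Matrix R (Fin k) ℂ) :
    singDown B = Real.sqrt ∘ sortDown (isHermitian_conjTranspose_mul_self B).eigenvalues :=
  sortDown_comp_of_monotone (fun _ _ h => Real.sqrt_le_sqrt h) _

lemma specNorm_nonneg (B : Matrix R (Fin k) ℂ) : 0 ≤ specNorm B :=
  Real.sSup_nonneg (by rintro _ ⟨i, rfl⟩; rw [singDown_eq_sqrt_comp]; exact Real.sqrt_nonneg _)

lemma Matrix.IsHermitian.singDown_eq {M : Matrix (Fin k) (Fin k) ℂ} (hM : M.IsHermitian) :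
    singDown M = sortDown fun i => |hM.eigenvalues i| :=
  sortDown_congr (by
    rw [← Function.comp_def Real.sqrt, ← Multiset.map_map,
      hM.map_eigenvalues_conjTranspose_mul_self, Multiset.map_map]
    simp only [Function.comp_def, Real.sqrt_sq_eq_abs])

lemma Matrix.IsHermitian.abs_eigenvalues_le_specNorm {M : Matrix (Fin k) (Fin k) ℂ}
    (hM : M.IsHermitian) (l : Fin k) : |hM.eigenvalues l| ≤ specNorm M := by
  refine le_csSup (Set.finite_range _).bddAbove ?_
  rw [hM.singDown_eq, range_sortDown]
  exact ⟨l, rfl⟩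

end SingularValues

section QuadraticForm

variable {𝕜 n : Type*} [RCLike 𝕜] [Fintype n]

lemma star_dotProduct_self_eq_sum (x : n → 𝕜) : star x ⬝ᵥ x = ((∑ l, ‖x l‖ ^ 2 : ℝ) : 𝕜) := by
  simp [dotProduct, RCLike.conj_mul]

lemma star_dotProduct_conjTranspose_mul_mul_mulVec {m : Type*} [Fintype m]
    (S : Matrix m n 𝕜) (B : Matrix m m 𝕜) (x : n → 𝕜) :
    star x ⬝ᵥ ((Sᴴ * B * S) *ᵥ x) = star (S *ᵥ x) ⬝ᵥ (B *ᵥ (S *ᵥ x)) := by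
  rw [← mulVec_mulVec, ← mulVec_mulVec, dotProduct_mulVec, star_mulVec]

lemma Matrix.IsHermitian.star_dotProduct_mulVec_eq_sum [DecidableEq n] {A : Matrix n n 𝕜}
    (hA : A.IsHermitian) (x : n → 𝕜) :
    star x ⬝ᵥ (A *ᵥ x) = ((∑ l, hA.eigenvalues l *
      ‖(star (hA.eigenvectorUnitary : Matrix n n 𝕜) *ᵥ x) l‖ ^ 2 : ℝ) : 𝕜) := by
  set U := (hA.eigenvectorUnitary : Matrix n n 𝕜)
  have hAU : A = (star U)ᴴ * diagonal (RCLike.ofReal ∘ hA.eigenvalues) * star U := by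
    rw [← star_eq_conjTranspose, star_star]
    exact hA.spectral_theorem
  conv_lhs => rw [hAU, star_dotProduct_conjTranspose_mul_mul_mulVec]
  simp [dotProduct, mulVec_diagonal, mul_left_comm _ (hA.eigenvalues _ : 𝕜), RCLike.conj_mul]

lemma Matrix.IsHermitian.norm_star_dotProduct_mulVec_le {m : ℕ} {A : Matrix (Fin m) (Fin m) ℂ}
    (hA : A.IsHermitian) (x : Fin m → ℂ) :
    ‖star x ⬝ᵥ (A *ᵥ x)‖ ≤ specNorm A * ‖star x ⬝ᵥ x‖ := by
  set U := (hA.eigenvectorUnitary : Matrix (Fin m) (Fin m) ℂ)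
  have hx : star x ⬝ᵥ x = star (star U *ᵥ x) ⬝ᵥ (star U *ᵥ x) := by
    simpa [U, ← star_eq_conjTranspose] using
      star_dotProduct_conjTranspose_mul_mul_mulVec (star U) 1 x
  rw [hA.star_dotProduct_mulVec_eq_sum, hx, star_dotProduct_self_eq_sum, RCLike.norm_ofReal,
    RCLike.norm_ofReal, abs_of_nonneg (sum_nonneg fun l _ => sq_nonneg ‖(star U *ᵥ x) l‖), mul_sum]
  refine (abs_sum_le_sum_abs _ _).trans (sum_le_sum fun l _ => ?_)
  rw [abs_mul, abs_sq]
  exact mul_le_mul_of_nonneg_right (hA.abs_eigenvalues_le_specNorm l) (sq_nonneg _)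

end QuadraticForm

section Compression

variable {m k : ℕ} {A : Matrix (Fin m) (Fin m) ℂ} (hA : A.IsHermitian)
  (S : Matrix (Fin m) (Fin k) ℂ)

/-- `|λᵢ(Sᴴ A S)| ≤ ‖A‖ ∑_l μ_l |G_li|²`, where `μ` are the eigenvalues of `Sᴴ S` and `G = Wᴴ V` is
the unitary matrix of overlaps between the eigenbases `W` of `Sᴴ S` and `V` of `Sᴴ A S`. -/
lemma abs_eigenvalues_conjTranspose_mul_mul_le :
    (fun i => |(isHermitian_conjTranspose_mul_mul S hA).eigenvalues i|) ≤
      (specNorm A • (isHermitian_conjTranspose_mul_self S).eigenvalues) ᵥ*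
        of fun l i => ‖(star ((isHermitian_conjTranspose_mul_self S).eigenvectorUnitary :
          Matrix (Fin k) (Fin k) ℂ) * (isHermitian_conjTranspose_mul_mul S hA).eigenvectorUnitary)
            l i‖ ^ 2 := by
  intro i
  set hM := isHermitian_conjTranspose_mul_mul S hA
  set hP := isHermitian_conjTranspose_mul_self S
  have hv : star (hP.eigenvectorUnitary : Matrix (Fin k) (Fin k) ℂ) *ᵥ ⇑(hM.eigenvectorBasis i) =
      fun l => (star (hP.eigenvectorUnitary : Matrix (Fin k) (Fin k) ℂ) *
        hM.eigenvectorUnitary) l i := by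
    rw [← hM.eigenvectorUnitary_mulVec, mulVec_mulVec, mulVec_single_one]
    rfl
  set v := ⇑(hM.eigenvectorBasis i)
  have hSv : star (S *ᵥ v) ⬝ᵥ (S *ᵥ v) = star v ⬝ᵥ ((Sᴴ * S) *ᵥ v) := by
    simpa using (star_dotProduct_conjTranspose_mul_mul_mulVec S 1 v).symm
  calc |hM.eigenvalues i| = |RCLike.re (star v ⬝ᵥ ((Sᴴ * A * S) *ᵥ v))| := by
        rw [hM.eigenvalues_eq]
    _ ≤ ‖star v ⬝ᵥ ((Sᴴ * A * S) *ᵥ v)‖ := RCLike.abs_re_le_norm _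
    _ ≤ specNorm A * ‖star (S *ᵥ v) ⬝ᵥ (S *ᵥ v)‖ := by
        rw [star_dotProduct_conjTranspose_mul_mul_mulVec]
        exact hA.norm_star_dotProduct_mulVec_le _
    _ = _ := by
        rw [hSv, hP.star_dotProduct_mulVec_eq_sum, hv, RCLike.norm_ofReal,
          abs_of_nonneg (sum_nonneg fun l _ =>
            mul_nonneg (eigenvalues_conjTranspose_mul_self_nonneg S l) (sq_nonneg _))]
        simp [vecMul, dotProduct, mul_sum, mul_assoc]

theorem weakMaj_abs_eigenvalues_conjTranspose_mul_mul :
    WeakMaj (fun i => |(isHermitian_conjTranspose_mul_mul S hA).eigenvalues i|)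
      (specNorm A • (isHermitian_conjTranspose_mul_self S).eigenvalues) :=
  weakMaj_of_le_vecMul
    (of_norm_sq_mem_doublyStochastic (mul_mem (Unitary.star_mem (Subtype.prop _))
      (Subtype.prop _)))
    (fun l => mul_nonneg (specNorm_nonneg A) (eigenvalues_conjTranspose_mul_self_nonneg S l))
    (abs_eigenvalues_conjTranspose_mul_mul_le hA S)

end Compression

lemma Matrix.IsHermitian.sortDown_abs_eigDown_neg {k : ℕ} {M : Matrix (Fin k) (Fin k) ℂ}
    (hM : M.IsHermitian) : sortDown (fun i => |eigDown hM.neg i|) = singDown M := by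
  rw [hM.singDown_eq, eigDown, ← Function.comp_def abs, sortDown_comp_sortDown]
  refine sortDown_congr ?_
  rw [← Multiset.map_map, hM.map_eigenvalues_neg, Multiset.map_map]
  simp

lemma Matrix.mul_conjTranspose_add_mul_conjTranspose_eq_one {α n k m : Type*} [CommRing α]
    [StarRing α] [Fintype n] [Fintype k] [Fintype m] [DecidableEq n] [DecidableEq k]
    [DecidableEq m] (e : n ≃ k ⊕ m) {X : Matrix n k α} {Xp : Matrix n m α} (hX : Xᴴ * X = 1)
    (hXp : Xpᴴ * Xp = 1) (hXXp : Xᴴ * Xp = 0) : X * Xᴴ + Xp * Xpᴴ = 1 := by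
  have hXpX : Xpᴴ * X = 0 := by
    rw [← conjTranspose_conjTranspose X, ← conjTranspose_mul, hXXp, conjTranspose_zero]
  rw [← fromCols_mul_fromRows, fromCols_mul_fromRows_eq_one_comm e, fromRows_mul_fromCols, hX,
    hXp, hXXp, hXpX, fromBlocks_one]

lemma Matrix.conjTranspose_mul_self_eq_one_sub {α n k m : Type*} [CommRing α] [StarRing α]
    [Fintype n] [Fintype k] [Fintype m] [DecidableEq n] [DecidableEq k] {X Y : Matrix n k α}
    {Xp : Matrix n m α} (hXp : X * Xᴴ + Xp * Xpᴴ = 1) (hY : Yᴴ * Y = 1) :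
    (Xpᴴ * Y)ᴴ * (Xpᴴ * Y) = 1 - (Xᴴ * Y)ᴴ * (Xᴴ * Y) := by
  simp only [conjTranspose_mul, conjTranspose_conjTranspose, Matrix.mul_assoc]
  rw [← Matrix.mul_assoc Xp, eq_sub_of_add_eq' hXp, Matrix.sub_mul, Matrix.mul_sub,
    Matrix.one_mul, hY, Matrix.mul_assoc X]

lemma sin_sq_principalAngles {R R' : Type*} [Fintype R] [Fintype R'] {k : ℕ}
    {X Y : Matrix R (Fin k) ℂ} {S : Matrix R' (Fin k) ℂ}
    (h : Sᴴ * S = 1 - (Xᴴ * Y)ᴴ * (Xᴴ * Y)) (i : Fin k) :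
    Real.sin (principalAngles X Y i) ^ 2 =
      sortDown (isHermitian_conjTranspose_mul_self S).eigenvalues i := by
  set τ := (isHermitian_conjTranspose_mul_self (Xᴴ * Y)).eigenvalues
  have hμ := (isHermitian_conjTranspose_mul_self (Xᴴ * Y)).map_eigenvalues_of_eq_one_sub
    (isHermitian_conjTranspose_mul_self S) h
  have hτ (l : Fin k) : 0 ≤ τ l ∧ τ l ≤ 1 := by
    obtain ⟨l', -, hl'⟩ := Multiset.mem_map.1
      (hμ ▸ Multiset.mem_map_of_mem (fun l => 1 - τ l) (mem_univ l))
    exact ⟨eigenvalues_conjTranspose_mul_self_nonneg _ l,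
      by linarith [eigenvalues_conjTranspose_mul_self_nonneg S l']⟩
  have h₀ : 0 ≤ sortDown τ i.rev := (hτ _).1
  have h₁ : sortDown τ i.rev ≤ 1 := (hτ _).2
  rw [sortDown_congr hμ, ← Function.comp_def (fun t => 1 - t),
    sortDown_comp_of_antitone fun _ _ h => sub_le_sub_left h 1, principalAngles,
    singDown_eq_sqrt_comp, Function.comp_apply, Real.sin_arccos, Real.sq_sqrt h₀,
    Real.sq_sqrt (sub_nonneg.2 h₁)]
  rfl

lemma weakMaj_singDown_conjTranspose_mul_mul {m k : ℕ} {A : Matrix (Fin m) (Fin m) ℂ}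
    (hA : A.IsHermitian) (S : Matrix (Fin m) (Fin k) ℂ) :
    WeakMaj (singDown (Sᴴ * A * S))
      (fun i => specNorm A * sortDown (isHermitian_conjTranspose_mul_self S).eigenvalues i) := by
  intro j
  rw [(isHermitian_conjTranspose_mul_mul S hA).singDown_eq, psum_sortDown,
    ← Function.comp_def (specNorm A * ·),
    ← sortDown_comp_of_monotone fun _ _ h => mul_le_mul_of_nonneg_left h (specNorm_nonneg A),
    psum_sortDown]
  exact weakMaj_abs_eigenvalues_conjTranspose_mul_mul hA S j

/-- With `[X, X⊥]` unitary, `S = X⊥ᴴ Y`, `A₂₂ = X⊥ᴴ A X⊥`: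
`|λ(-Sᴴ A₂₂ S)|` arranged in nonincreasing order equals `s(Sᴴ A₂₂ S)`, and
`s(Sᴴ A₂₂ S) ≺_w ‖A₂₂‖ * sin^2 θ(𝒳,𝒴)`. -/
theorem neg_SHAS_eig_abs_eq_sing_and_bound
    {n k m : ℕ} (hn : n = k + m)
    (A : Matrix (Fin n) (Fin n) ℂ) (hA : A.IsHermitian)
    (X : Matrix (Fin n) (Fin k) ℂ) (Xp : Matrix (Fin n) (Fin m) ℂ)
    (hX : Xᴴ * X = 1) (hXp : Xpᴴ * Xp = 1) (hXXp : Xᴴ * Xp = 0)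
    (Y : Matrix (Fin n) (Fin k) ℂ) (hY : Yᴴ * Y = 1) :
    sortDown (fun i =>
        |eigDown ((Matrix.isHermitian_conjTranspose_mul_mul (Xpᴴ * Y)
            (Matrix.isHermitian_conjTranspose_mul_mul Xp hA)).neg) i|)
      = singDown ((Xpᴴ * Y)ᴴ * (Xpᴴ * A * Xp) * (Xpᴴ * Y)) ∧
    WeakMaj (singDown ((Xpᴴ * Y)ᴴ * (Xpᴴ * A * Xp) * (Xpᴴ * Y)))
      (fun i => specNorm (Xpᴴ * A * Xp) * Real.sin (principalAngles X Y i) ^ 2) := by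
  have hA₂₂ := isHermitian_conjTranspose_mul_mul Xp hA
  refine ⟨(isHermitian_conjTranspose_mul_mul _ hA₂₂).sortDown_abs_eigDown_neg, ?_⟩
  have hcompl := mul_conjTranspose_add_mul_conjTranspose_eq_one
    ((finCongr hn).trans finSumFinEquiv.symm) hX hXp hXXp
  simp_rw [sin_sq_principalAngles (conjTranspose_mul_self_eq_one_sub hcompl hY)]
  exact weakMaj_singDown_conjTranspose_mul_mul hA₂₂ (Xpᴴ * Y)
end

section
/- Let A ∈ ℂ^{4×4} be the Hermitian matrix with 2×2 blocks A = [[A₁₁, 0],[0, A₂₂]], A₁₁ = [[0,1],[1,0]], A₂₂ = I₂; let X = (e₁, e₂), X⊥ = (e₃, e₄) (so [X, X⊥] = I₄), and let Y = (e₃, e₂) ∈ ℂ^{4×2}. Set C := X^H Y and S := X⊥^H Y. Then range(X) is A-invariant, θ(range(X), range(Y)) = (π/2, 0), spr(A) = 2, the vector a := [λ(A₁₁) − λ(C^H A₁₁ C)]^↓ + λ(−S^H A₂₂ S) equals (1, −2), and |a| is NOT weakly majorized by spr(A) · sin²θ(range(X), range(Y)) = (2, 0); nevertheless |λ(X^H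 A X) − λ(Y^H A Y)| = (0, 1) IS weakly majorized by (2, 0). -/
open Matrix Finset

/-!
Apart from `spr A`, all spectral data concern `2 × 2` Hermitian matrices, whose eigenvalues are the
roots of `t² - (tr M) t + det M` and so are read off a trace and a determinant. The matrix `A` is a
Hermitian involution different from `±1`, so its spectrum is `{1, -1}` and `spr A = 2`, and
`A X = X A₁₁` makes `range X` invariant. For pairs, weak majorization only compares maxima and
sums: `|a| = (1, 2)` has sum `3 > 2`, while `(0, 1)` has maximum `1 ≤ 2` and sum `1 ≤ 2`.
-/

lemma sortDown_fin_two (x : Fin 2 → ℝ) : sortDown x = ![max (x 0) (x 1), min (x 0) (x 1)] := by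
  set σ := Tuple.sort x
  have hle : x (σ 0) ≤ x (σ 1) := Tuple.monotone_sort x (by decide)
  have hsum : x (σ 0) + x (σ 1) = x 0 + x 1 := by
    simpa only [Fin.sum_univ_two] using Equiv.sum_comp σ x
  have hmem : x (σ 1) = x 0 ∨ x (σ 1) = x 1 := by
    rcases Fin.exists_fin_two.mp ⟨σ 1, rfl⟩ with h | h <;> simp [h]
  ext i
  fin_cases i
  · show x (σ 1) = max (x 0) (x 1)
    rcases hmem with h | h <;> rw [max_def] <;> split_ifs <;> linarith
  · show x (σ 0) = min (x 0) (x 1)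
    rcases hmem with h | h <;> rw [min_def] <;> split_ifs <;> linarith

lemma sortDown_eq_of_fin_two {x : Fin 2 → ℝ} {a b : ℝ} (hba : b ≤ a)
    (hx : x = ![a, b] ∨ x = ![b, a]) : sortDown x = ![a, b] := by
  rcases hx with rfl | rfl <;> simp [sortDown_fin_two, hba]

lemma psum_zero {k : ℕ} (x : Fin k → ℝ) : psum x 0 = 0 := by
  simp [psum]

lemma psum_fin_two_one (x : Fin 2 → ℝ) : psum x 1 = max (x 0) (x 1) := by
  have h : (Finset.univ.filter fun i : Fin 2 => (i : ℕ) < 1) = {0} := by decide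
  rw [psum, h, Finset.sum_singleton, sortDown_fin_two]
  rfl

lemma psum_fin_two_of_two_le (x : Fin 2 → ℝ) {j : ℕ} (hj : 2 ≤ j) : psum x j = x 0 + x 1 := by
  rw [psum, Finset.filter_true_of_mem fun i _ => i.isLt.trans_le hj, Fin.sum_univ_two,
    sortDown_fin_two]
  simp [max_add_min]

lemma weakMaj_fin_two_iff {x y : Fin 2 → ℝ} :
    WeakMaj x y ↔ max (x 0) (x 1) ≤ max (y 0) (y 1) ∧ x 0 + x 1 ≤ y 0 + y 1 := by
  refine ⟨fun h => ?_, fun ⟨h1, h2⟩ j => ?_⟩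
  · have h1 := h 1
    have h2 := h 2
    rw [psum_fin_two_one, psum_fin_two_one] at h1
    rw [psum_fin_two_of_two_le _ le_rfl, psum_fin_two_of_two_le _ le_rfl] at h2
    exact ⟨h1, h2⟩
  · match j with
    | 0 => simp only [psum_zero, le_refl]
    | 1 => rwa [psum_fin_two_one, psum_fin_two_one]
    | j + 2 => rwa [psum_fin_two_of_two_le _ (by omega), psum_fin_two_of_two_le _ (by omega)]

lemma Matrix.IsHermitian.eigenvalues_fin_two {𝕜 : Type*} [RCLike 𝕜] {M : Matrix (Fin 2) (Fin 2) 𝕜}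
    (hM : M.IsHermitian) {a b : ℝ} (htr : M.trace = a + b) (hdet : M.det = a * b) :
    hM.eigenvalues = ![a, b] ∨ hM.eigenvalues = ![b, a] := by
  set p := hM.eigenvalues 0
  set q := hM.eigenvalues 1
  have hsum : p + q = a + b := by
    rw [hM.trace_eq_sum_eigenvalues, Fin.sum_univ_two] at htr
    exact_mod_cast htr
  have hprod : p * q = a * b := by
    rw [hM.det_eq_prod_eigenvalues, Fin.prod_univ_two] at hdet
    exact_mod_cast hdet
  have hroot : (p - a) * (p - b) = 0 := by linear_combination p * hsum - hprod
  rcases mul_eq_zero.mp hroot with h | h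
  · left; ext i; fin_cases i <;> simp <;> linarith
  · right; ext i; fin_cases i <;> simp <;> linarith

lemma eigDown_fin_two {M : Matrix (Fin 2) (Fin 2) ℂ} (hM : M.IsHermitian) {a b : ℝ} (hba : b ≤ a)
    (htr : M.trace = a + b) (hdet : M.det = a * b) : eigDown hM = ![a, b] :=
  sortDown_eq_of_fin_two hba (hM.eigenvalues_fin_two htr hdet)

lemma singDown_fin_two {R : Type*} [Fintype R] {B : Matrix R (Fin 2) ℂ} {p q : ℝ} (hqp : q ≤ p)
    (htr : (Bᴴ * B).trace = p + q) (hdet : (Bᴴ * B).det = p * q) :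
    singDown B = ![√p, √q] := by
  refine sortDown_eq_of_fin_two (Real.sqrt_le_sqrt hqp) ?_
  rcases (isHermitian_conjTranspose_mul_self B).eigenvalues_fin_two htr hdet with h | h <;>
    [left; right] <;> ext i <;> fin_cases i <;> simp [h]

lemma principalAngles_fin_two {R : Type*} [Fintype R] (X Y : Matrix R (Fin 2) ℂ) :
    principalAngles X Y =
      ![Real.arccos (singDown (Xᴴ * Y) 1), Real.arccos (singDown (Xᴴ * Y) 0)] := by
  ext i; fin_cases i <;> rfl

namespace Matrix.IsHermitian

variable {𝕜 n : Type*} [RCLike 𝕜] [Fintype n] [DecidableEq n] {A : Matrix n n 𝕜}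

lemma eq_smul_one_of_eigenvalues_eq (hA : A.IsHermitian) {c : ℝ} (h : ∀ i, hA.eigenvalues i = c) :
    A = (c : 𝕜) • 1 := by
  have hdiag : diagonal (RCLike.ofReal ∘ hA.eigenvalues) = (c : 𝕜) • (1 : Matrix n n 𝕜) := by
    ext i j
    simp [diagonal_apply, one_apply, h]
  rw [hA.spectral_theorem, hdiag, map_smul, map_one]

lemma eigenvalues_eq_one_or_neg_one (hA : A.IsHermitian) (hsq : A * A = 1) (i : n) :
    hA.eigenvalues i = 1 ∨ hA.eigenvalues i = -1 := by
  set v : n → 𝕜 := ⇑(hA.eigenvectorBasis i)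
  have hv : v ≠ 0 := (WithLp.ofLp_eq_zero 2).ne.2 <| hA.eigenvectorBasis.orthonormal.ne_zero i
  have hAv : A *ᵥ v = hA.eigenvalues i • v := hA.mulVec_eigenvectorBasis i
  have hsq_v : (hA.eigenvalues i * hA.eigenvalues i) • v = (1 : ℝ) • v := by
    rw [mul_smul, ← hAv, ← mulVec_smul, ← hAv, mulVec_mulVec, hsq, one_mulVec, one_smul]
  exact mul_self_eq_one_iff.mp (smul_left_injective ℝ hv hsq_v)

end Matrix.IsHermitian

lemma sprA_eq_two_of_mul_self_eq_one {n : Type*} [Fintype n] [DecidableEq n]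
    {A : Matrix n n ℂ} (hA : A.IsHermitian) (hsq : A * A = 1) (hne_one : A ≠ 1)
    (hne_neg_one : A ≠ -1) : sprA hA = 2 := by
  have hpm := hA.eigenvalues_eq_one_or_neg_one hsq
  have hrange : Set.range hA.eigenvalues = {1, -1} := by
    refine subset_antisymm (Set.range_subset_iff.mpr hpm) ?_
    rintro μ (rfl | rfl)
    · by_contra hno
      have hall (i : n) : hA.eigenvalues i = -1 := (hpm i).resolve_left fun h => hno ⟨i, h⟩
      exact hne_neg_one (by simpa using hA.eq_smul_one_of_eigenvalues_eq hall)
    · by_contra hno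
      have hall (i : n) : hA.eigenvalues i = 1 := (hpm i).resolve_right fun h => hno ⟨i, h⟩
      exact hne_one (by simpa using hA.eq_smul_one_of_eigenvalues_eq hall)
  rw [sprA, hrange, csSup_pair, csInf_pair]
  norm_num

lemma invariantRange_of_mul_eq_mul {R : Type*} [Fintype R] {k : ℕ} {A : Matrix R R ℂ}
    {X : Matrix R (Fin k) ℂ} (B : Matrix (Fin k) (Fin k) ℂ) (h : A * X = X * B) :
    InvariantRange A X :=
  fun u => ⟨B *ᵥ u, by rw [mulVec_mulVec, h, ← mulVec_mulVec]⟩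

namespace LidskiiExample

/- Reducible, so that the lemmas below apply to the literal matrices of the theorem once its
defining equations are substituted. -/
abbrev A : Matrix (Fin 2 ⊕ Fin 2) (Fin 2 ⊕ Fin 2) ℂ := fromBlocks !![0, 1; 1, 0] 0 0 1

abbrev X : Matrix (Fin 2 ⊕ Fin 2) (Fin 2) ℂ := fromRows 1 0

abbrev Xp : Matrix (Fin 2 ⊕ Fin 2) (Fin 2) ℂ := fromRows 0 1

abbrev Y : Matrix (Fin 2 ⊕ Fin 2) (Fin 2) ℂ := fromRows !![0, 0; 0, 1] !![1, 0; 0, 0]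

lemma invariantRange_X : InvariantRange A X :=
  invariantRange_of_mul_eq_mul !![0, 1; 1, 0] (by simp [fromBlocks_mul_fromRows])

lemma A_mul_self : A * A = 1 := by
  simp [fromBlocks_multiply, one_fin_two, ← fromBlocks_one]

lemma A_ne_one : A ≠ 1 := fun h => by
  simpa using congrFun₂ h (Sum.inl 0) (Sum.inl 0)

lemma A_ne_neg_one : A ≠ -1 := fun h => by
  have h₀ := congrFun₂ h (Sum.inr 0) (Sum.inr 0)
  norm_num at h₀

lemma sprA_eq_two (hA : A.IsHermitian) : sprA hA = 2 :=
  sprA_eq_two_of_mul_self_eq_one hA A_mul_self A_ne_one A_ne_neg_one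

lemma conjTranspose_X_mul_Y : Xᴴ * Y = !![0, 0; 0, 1] := by
  simp [conjTranspose_fromRows_eq_fromCols_conjTranspose, fromCols_mul_fromRows]

lemma conjTranspose_Xp_mul_Y : Xpᴴ * Y = !![1, 0; 0, 0] := by
  simp [conjTranspose_fromRows_eq_fromCols_conjTranspose, fromCols_mul_fromRows]

lemma compression_X : Xᴴ * A * X = !![0, 1; 1, 0] := by
  simp [conjTranspose_fromRows_eq_fromCols_conjTranspose, fromCols_mul_fromBlocks,
    fromCols_mul_fromRows]

lemma compression_Xp : Xpᴴ * A * Xp = 1 := by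
  simp [conjTranspose_fromRows_eq_fromCols_conjTranspose, fromCols_mul_fromBlocks,
    fromCols_mul_fromRows]

lemma compression_Y : Yᴴ * A * Y = !![1, 0; 0, 0] := by
  simp [conjTranspose_fromRows_eq_fromCols_conjTranspose, fromCols_mul_fromBlocks,
    fromCols_mul_fromRows]
  ext i j; fin_cases i <;> fin_cases j <;> simp [mul_apply]

lemma principalAngles_X_Y : principalAngles X Y = ![Real.pi / 2, 0] := by
  rw [principalAngles_fin_two, singDown_fin_two (p := 1) (q := 0) zero_le_one
    (by simp [conjTranspose_X_mul_Y, trace_fin_two, mul_apply])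
    (by simp [conjTranspose_X_mul_Y, det_fin_two])]
  simp

lemma eigDown_compression_X (hA : A.IsHermitian) :
    eigDown (isHermitian_conjTranspose_mul_mul X hA) = ![1, -1] :=
  eigDown_fin_two _ (by norm_num) (by simp [compression_X, trace_fin_two])
    (by simp [compression_X, det_fin_two])

lemma eigDown_compression_Y (hA : A.IsHermitian) :
    eigDown (isHermitian_conjTranspose_mul_mul Y hA) = ![1, 0] :=
  eigDown_fin_two _ zero_le_one (by simp [compression_Y, trace_fin_two])
    (by simp [compression_Y, det_fin_two])

lemma eigDown_compression_C (hA : A.IsHermitian) :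
    eigDown (isHermitian_conjTranspose_mul_mul (Xᴴ * Y)
      (isHermitian_conjTranspose_mul_mul X hA)) = ![0, 0] :=
  eigDown_fin_two _ le_rfl
    (by simp [conjTranspose_X_mul_Y, compression_X, trace_fin_two, mul_apply])
    (by simp [conjTranspose_X_mul_Y, compression_X, det_fin_two])

lemma eigDown_neg_compression_S (hA : A.IsHermitian) :
    eigDown (isHermitian_conjTranspose_mul_mul (Xpᴴ * Y)
      (isHermitian_conjTranspose_mul_mul Xp hA)).neg = ![0, -1] :=
  eigDown_fin_two _ (by norm_num)
    (by simp [conjTranspose_Xp_mul_Y, compression_Xp, trace_fin_two, mul_apply])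
    (by simp [conjTranspose_Xp_mul_Y, compression_Xp, det_fin_two, mul_apply])

lemma abs_eigDown_sub_eigDown (hA : A.IsHermitian) :
    (fun i => |eigDown (isHermitian_conjTranspose_mul_mul X hA) i
      - eigDown (isHermitian_conjTranspose_mul_mul Y hA) i|) = ![0, 1] := by
  rw [eigDown_compression_X hA, eigDown_compression_Y hA]
  ext i; fin_cases i <;> simp

lemma lidskii_vector_eq (hA : A.IsHermitian) :
    (fun i => sortDown (fun j => eigDown (isHermitian_conjTranspose_mul_mul X hA) j
        - eigDown (isHermitian_conjTranspose_mul_mul (Xᴴ * Y)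
            (isHermitian_conjTranspose_mul_mul X hA)) j) i
      + eigDown (isHermitian_conjTranspose_mul_mul (Xpᴴ * Y)
          (isHermitian_conjTranspose_mul_mul Xp hA)).neg i) = ![1, -2] := by
  rw [eigDown_compression_X hA, eigDown_compression_C hA, eigDown_neg_compression_S hA]
  ext i; fin_cases i <;> norm_num [sortDown_fin_two]

end LidskiiExample

/-- The 4×4 counterexample to proving the conjecture via the
Lidskii step: `range X` is `A`-invariant, `θ = (π/2, 0)`, `spr(A) = 2`, the
vector `a = [λ(A₁₁) - λ(Cᴴ A₁₁ C)]^↓ + λ(-Sᴴ A₂₂ S)` equals `(1, -2)`, and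
`|a|` is NOT weakly majorized by `spr(A) sin² θ = (2, 0)`; nevertheless
`|λ(Xᴴ A X) - λ(Yᴴ A Y)| = (0, 1)` IS weakly majorized by `(2, 0)`. -/
theorem ritz_error_lidskii_counterexample
    (A : Matrix (Fin 2 ⊕ Fin 2) (Fin 2 ⊕ Fin 2) ℂ)
    (hAdef : A = Matrix.fromBlocks !![0, 1; 1, 0] 0 0 1)
    (X Xp Y : Matrix (Fin 2 ⊕ Fin 2) (Fin 2) ℂ)
    (hXdef : X = Matrix.fromRows 1 0)
    (hXpdef : Xp = Matrix.fromRows 0 1)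
    (hYdef : Y = Matrix.fromRows !![0, 0; 0, 1] !![1, 0; 0, 0])
    (hA : A.IsHermitian) :
    InvariantRange A X ∧
    principalAngles X Y = ![Real.pi / 2, 0] ∧
    sprA hA = 2 ∧
    (fun i => sprA hA * Real.sin (principalAngles X Y i) ^ 2) = ![(2 : ℝ), 0] ∧
    (fun i =>
        sortDown (fun j => eigDown (Matrix.isHermitian_conjTranspose_mul_mul X hA) j
          - eigDown (Matrix.isHermitian_conjTranspose_mul_mul (Xᴴ * Y)
              (Matrix.isHermitian_conjTranspose_mul_mul X hA)) j) i
        + eigDown ((Matrix.isHermitian_conjTranspose_mul_mul (Xpᴴ * Y)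
            (Matrix.isHermitian_conjTranspose_mul_mul Xp hA)).neg) i)
      = ![(1 : ℝ), -2] ∧
    ¬ WeakMaj (fun i => |(![(1 : ℝ), -2]) i|) ![(2 : ℝ), 0] ∧
    (fun i => |eigDown (Matrix.isHermitian_conjTranspose_mul_mul X hA) i
        - eigDown (Matrix.isHermitian_conjTranspose_mul_mul Y hA) i|) = ![(0 : ℝ), 1] ∧
    WeakMaj (fun i => |eigDown (Matrix.isHermitian_conjTranspose_mul_mul X hA) i
        - eigDown (Matrix.isHermitian_conjTranspose_mul_mul Y hA) i|) ![(2 : ℝ), 0] := by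
  subst hAdef hXdef hXpdef hYdef
  have hθ := LidskiiExample.principalAngles_X_Y
  have hspr := LidskiiExample.sprA_eq_two hA
  have hgap := LidskiiExample.abs_eigDown_sub_eigDown hA
  refine ⟨LidskiiExample.invariantRange_X, hθ, hspr, ?_, LidskiiExample.lidskii_vector_eq hA, ?_,
    hgap, ?_⟩
  · ext i; fin_cases i <;> simp [hspr, hθ]
  · norm_num [weakMaj_fin_two_iff]
  · norm_num [hgap, weakMaj_fin_two_iff]
end
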